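/- The map (x₁,x₂) ↦ (x₂, -x₁²) on ℝ² has an isolated zero at the origin whose index (Brouwer degree of the normalized map on a small circle) equals 0. -/

import Mathlib

/-!
The second component `-x₁²` of the field is never positive, so its normalization on any circle
misses `(0, 1)`, the antipode of `(0, -1)`. A map into the unit sphere that misses the antipode
of `y` is homotopic to the constant map `y` by normalizing the straight-line homotopy, which never
passes through `0`: `(1 - t) • u + t • y = 0` with unit vectors forces `|1 - t| = |t|`, so
`t = 1 / 2` and `u = -y`.
-/

open Metric AffineMap
open NormedSpace (normalize_eq_self_of_norm_eq_one norm_normalize_eq_one_iff)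

section

variable {E : Type*} [NormedAddCommGroup E] [NormedSpace ℝ E]

theorem lineMap_ne_zero_of_ne_neg {u y : E} (hu : ‖u‖ = 1) (hy : ‖y‖ = 1) (huy : u ≠ -y)
    (t : ℝ) : lineMap u y t ≠ 0 := by
  intro h
  rw [lineMap_apply_module, add_eq_zero_iff_eq_neg] at h
  have habs : |1 - t| = |t| := by simpa [norm_smul, hu, hy] using congrArg norm h
  have ht : t = 1 / 2 := by
    rcases abs_eq_abs.mp habs with h' | h' <;> linarith
  subst ht
  norm_num at h
  exact huy (smul_right_injective E (by norm_num : (1 / 2 : ℝ) ≠ 0) (by simpa using h))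

variable {X : Type*} [TopologicalSpace X]

theorem ContinuousMap.homotopic_const_of_forall_ne_neg (g : C(X, sphere (0 : E) 1))
    (y : sphere (0 : E) 1) (h : ∀ x, (g x : E) ≠ -y) : g.Homotopic (const X y) := by
  have hg : ∀ x, ‖(g x : E)‖ = 1 := fun x => by simp
  have hy : ‖(y : E)‖ = 1 := by simp
  have hne : ∀ q : unitInterval × X, lineMap (g q.2 : E) (y : E) (q.1 : ℝ) ≠ 0 :=
    fun q => lineMap_ne_zero_of_ne_neg (hg q.2) hy (h q.2) q.1
  refine ⟨{ toFun q := ⟨NormedSpace.normalize (lineMap (g q.2 : E) (y : E) (q.1 : ℝ)), ?_⟩,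
            continuous_toFun := ?_, map_zero_left := ?_, map_one_left := ?_ }⟩
  · simpa [norm_normalize_eq_one_iff] using hne q
  · have hv : Continuous fun q : unitInterval × X => lineMap (g q.2 : E) (y : E) (q.1 : ℝ) := by
      simp only [lineMap_apply_module]
      fun_prop
    exact ((hv.norm.inv₀ fun q => norm_ne_zero_iff.mpr (hne q)).smul hv).subtype_mk _
  · intro x
    ext1
    simp [normalize_eq_self_of_norm_eq_one (hg x)]
  · intro x
    ext1
    simp [normalize_eq_self_of_norm_eq_one hy]

end

theorem snd_normalize_nonpos_of_snd_nonpos {v : ℝ × ℝ} (hv : v.2 ≤ 0) :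
    (NormedSpace.normalize v).2 ≤ 0 :=
  mul_nonpos_of_nonneg_of_nonpos (by positivity) hv

/-- the map (x₁,x₂) ↦ (x₂, -x₁²) has an isolated zero at the origin
whose index is 0: on every small circle the normalized map into the unit circle is
null-homotopic. -/
theorem stmt17 (w : ℝ × ℝ → ℝ × ℝ) (hw : w = fun x => (x.2, -(x.1 ^ 2))) :
    (∀ x : ℝ × ℝ, w x = 0 → x = 0) ∧
    ∀ r : ℝ, 0 < r →
      ∀ g : C(Metric.sphere (0 : ℝ × ℝ) r, Metric.sphere (0 : ℝ × ℝ) 1),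
        (∀ p : Metric.sphere (0 : ℝ × ℝ) r,
          (g p : ℝ × ℝ) = ‖w (p : ℝ × ℝ)‖⁻¹ • w (p : ℝ × ℝ)) →
        ∃ y : Metric.sphere (0 : ℝ × ℝ) 1,
          ContinuousMap.Homotopic g (ContinuousMap.const _ y) := by
  subst hw
  refine ⟨fun x hx => ?_, fun r _ g hg => ?_⟩
  · simp only [Prod.mk_eq_zero, neg_eq_zero, pow_eq_zero_iff two_ne_zero] at hx
    exact Prod.ext hx.2 hx.1
  · have hy : ((0 : ℝ), (-1 : ℝ)) ∈ sphere (0 : ℝ × ℝ) 1 := by simp [Prod.norm_def]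
    refine ⟨⟨(0, -1), hy⟩, g.homotopic_const_of_forall_ne_neg _ fun p hp => ?_⟩
    have hg2 : (g p : ℝ × ℝ).2 ≤ 0 :=
      (hg p).symm ▸ snd_normalize_nonpos_of_snd_nonpos (neg_nonpos.mpr (sq_nonneg _))
    norm_num [hp] at hg2
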